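/- arXiv:2105.15126 — 6 statements merged into one kernel-verified Lean document; each statement's English description precedes it below -/
import Mathlib

section
/- Let I ⊆ ℝ be an open interval and let α, γ, ξ : ℝ → ℝ be smooth on I with α nonvanishing on I. If ξ satisfies the two infinitesimal Lie equations α·ξ' + ξ·α' = 0 and ξ'' + γ·ξ' + ξ·γ' = 0 on I, then ξ·(α'/α² − γ/α)' = 0 on I; equivalently, ξ·(α·α'' − 2(α')² + α·γ·α' − α²·γ') = 0 on I. -/
/-- On an open interval `I = Ioo a b`, if `α, γ, ξ` are smooth with `α`
nonvanishing, and `ξ` satisfies the two infinitesimal Lie (Medolaghi) equations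
`α·ξ' + ξ·α' = 0` and `ξ'' + γ·ξ' + ξ·γ' = 0`, then
`ξ·(α'/α² − γ/α)' = 0`, equivalently `ξ·(α·α'' − 2(α')² + α·γ·α' − α²·γ') = 0` on `I`. -/
theorem stmt0 (a b : ℝ) (α γ ξ : ℝ → ℝ)
    (hα : ContDiffOn ℝ (⊤ : ℕ∞) α (Set.Ioo a b))
    (hγ : ContDiffOn ℝ (⊤ : ℕ∞) γ (Set.Ioo a b))
    (hξ : ContDiffOn ℝ (⊤ : ℕ∞) ξ (Set.Ioo a b))
    (hα0 : ∀ x ∈ Set.Ioo a b, α x ≠ 0)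
    (h1 : ∀ x ∈ Set.Ioo a b, α x * deriv ξ x + ξ x * deriv α x = 0)
    (h2 : ∀ x ∈ Set.Ioo a b,
      deriv (deriv ξ) x + γ x * deriv ξ x + ξ x * deriv γ x = 0) :
    ∀ x ∈ Set.Ioo a b,
      ξ x * deriv (fun y => deriv α y / (α y) ^ 2 - γ y / α y) x = 0 ∧
      ξ x * (α x * deriv (deriv α) x - 2 * (deriv α x) ^ 2
        + α x * γ x * deriv α x - (α x) ^ 2 * deriv γ x) = 0 := by
  intro x hx
  have hs : IsOpen (Set.Ioo a b) := isOpen_Ioo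
  have hmem : Set.Ioo a b ∈ nhds x := hs.mem_nhds hx
  have hA0 : α x ≠ 0 := hα0 x hx
  have hα' : ContDiffOn ℝ (⊤ : ℕ∞) (deriv α) (Set.Ioo a b) :=
    hα.deriv_of_isOpen hs (by simp)
  have hξ' : ContDiffOn ℝ (⊤ : ℕ∞) (deriv ξ) (Set.Ioo a b) :=
    hξ.deriv_of_isOpen hs (by simp)
  have hdA : HasDerivAt α (deriv α x) x :=
    (((hα x hx).contDiffAt hmem).differentiableAt (by simp)).hasDerivAt
  have hdA1 : HasDerivAt (deriv α) (deriv (deriv α) x) x :=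
    (((hα' x hx).contDiffAt hmem).differentiableAt (by simp)).hasDerivAt
  have hdG : HasDerivAt γ (deriv γ x) x :=
    (((hγ x hx).contDiffAt hmem).differentiableAt (by simp)).hasDerivAt
  have hdX : HasDerivAt ξ (deriv ξ x) x :=
    (((hξ x hx).contDiffAt hmem).differentiableAt (by simp)).hasDerivAt
  have hdX1 : HasDerivAt (deriv ξ) (deriv (deriv ξ) x) x :=
    (((hξ' x hx).contDiffAt hmem).differentiableAt (by simp)).hasDerivAt
  -- differentiate the first equation
  have hg : HasDerivAt (fun y => α y * deriv ξ y + ξ y * deriv α y)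
      (deriv α x * deriv ξ x + α x * deriv (deriv ξ) x
        + (deriv ξ x * deriv α x + ξ x * deriv (deriv α) x)) x :=
    (hdA.mul hdX1).add (hdX.mul hdA1)
  have hgeq : (fun y => α y * deriv ξ y + ξ y * deriv α y) =ᶠ[nhds x] fun _ => (0:ℝ) :=
    Filter.eventually_of_mem hmem h1
  have e3 : deriv α x * deriv ξ x + α x * deriv (deriv ξ) x
      + (deriv ξ x * deriv α x + ξ x * deriv (deriv α) x) = 0 := by
    have := hg.deriv
    rw [hgeq.deriv_eq, deriv_const] at this
    linarith [this]
  have e1 := h1 x hx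
  have e2 := h2 x hx
  have key : ξ x * (α x * deriv (deriv α) x - 2 * (deriv α x) ^ 2
      + α x * γ x * deriv α x - (α x) ^ 2 * deriv γ x) = 0 := by
    linear_combination α x * e3 - (α x)^2 * e2 - 2 * deriv α x * e1 + γ x * α x * e1
  refine ⟨?_, key⟩
  -- compute the derivative of α'/α² − γ/α
  have hsq : HasDerivAt (fun y => (α y) ^ 2) (2 * α x * deriv α x) x := by
    have : HasDerivAt (fun y => (α y) ^ 2) _ x := hdA.pow 2
    simpa [mul_comm] using this
  have hf1 : HasDerivAt (fun y => deriv α y / (α y) ^ 2)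
      ((deriv (deriv α) x * (α x) ^ 2 - deriv α x * (2 * α x * deriv α x)) / ((α x) ^ 2) ^ 2) x :=
    hdA1.div hsq (pow_ne_zero 2 hA0)
  have hf2 : HasDerivAt (fun y => γ y / α y)
      ((deriv γ x * α x - γ x * deriv α x) / (α x) ^ 2) x := hdG.div hdA hA0
  have hf : deriv (fun y => deriv α y / (α y) ^ 2 - γ y / α y) x = _ := (hf1.sub hf2).deriv
  rw [hf]
  have hexp : (deriv (deriv α) x * (α x) ^ 2 - deriv α x * (2 * α x * deriv α x)) / ((α x) ^ 2) ^ 2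
      - (deriv γ x * α x - γ x * deriv α x) / (α x) ^ 2
      = (α x * deriv (deriv α) x - 2 * (deriv α x) ^ 2
        + α x * γ x * deriv α x - (α x) ^ 2 * deriv γ x) / (α x) ^ 3 := by
    field_simp
    ring
  rw [hexp, mul_div_assoc']
  rw [key]
  simp
end

section
/- Let I ⊆ ℝ be an open interval and let α, γ, ξ : ℝ → ℝ be smooth on I with both α and ξ nonvanishing on I. If α·ξ' + ξ·α' = 0 and ξ'' + γ·ξ' + ξ·γ' = 0 on I, then there exists a constant c ∈ ℝ such that α' − γ·α = c·α² on I (the Vessiot structure equation with Vessiot structure constant c). -/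
open Set in
lemma const_on_Ioo {a b : ℝ} {f : ℝ → ℝ} (hf : DifferentiableOn ℝ f (Ioo a b))
    (hf' : ∀ x ∈ Ioo a b, deriv f x = 0) {x y : ℝ} (hx : x ∈ Ioo a b) (hy : y ∈ Ioo a b) :
    f x = f y := by
  apply (convex_Ioo a b).is_const_of_fderivWithin_eq_zero hf _ hx hy
  intro z hz
  rw [fderivWithin_of_isOpen isOpen_Ioo hz]
  ext
  simp [← toSpanSingleton_deriv, hf' z hz]


/-- On an open interval `I = Ioo a b`, if `α, γ, ξ` are smooth with `α` and `ξ`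
nonvanishing, and `ξ` satisfies `α·ξ' + ξ·α' = 0` and `ξ'' + γ·ξ' + ξ·γ' = 0` on `I`, then
there is a constant `c` with `α' − γ·α = c·α²` on `I` (the Vessiot structure equation). -/
theorem stmt1 (a b : ℝ) (α γ ξ : ℝ → ℝ)
    (hα : ContDiffOn ℝ (⊤ : ℕ∞) α (Set.Ioo a b))
    (hγ : ContDiffOn ℝ (⊤ : ℕ∞) γ (Set.Ioo a b))
    (hξ : ContDiffOn ℝ (⊤ : ℕ∞) ξ (Set.Ioo a b))
    (hα0 : ∀ x ∈ Set.Ioo a b, α x ≠ 0)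
    (hξ0 : ∀ x ∈ Set.Ioo a b, ξ x ≠ 0)
    (h1 : ∀ x ∈ Set.Ioo a b, α x * deriv ξ x + ξ x * deriv α x = 0)
    (h2 : ∀ x ∈ Set.Ioo a b,
      deriv (deriv ξ) x + γ x * deriv ξ x + ξ x * deriv γ x = 0) :
    ∃ c : ℝ, ∀ x ∈ Set.Ioo a b, deriv α x - γ x * α x = c * (α x) ^ 2 := by
  by_cases hne : (Set.Ioo a b).Nonempty
  · obtain ⟨x₀, hx₀⟩ := hne
    have hs : IsOpen (Set.Ioo a b) := isOpen_Ioo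
    -- differentiability facts
    have dat : ∀ (f : ℝ → ℝ), ContDiffOn ℝ (⊤ : ℕ∞) f (Set.Ioo a b) →
        ∀ x ∈ Set.Ioo a b, DifferentiableAt ℝ f x := by
      intro f hf x hx
      exact (hf.differentiableOn (by simp)).differentiableAt (hs.mem_nhds hx)
    have hdξ : ContDiffOn ℝ (⊤ : ℕ∞) (deriv ξ) (Set.Ioo a b) := hξ.deriv_of_isOpen hs (by simp)
    -- (A) α * ξ is constant
    have hA : ∀ x ∈ Set.Ioo a b, α x * ξ x = α x₀ * ξ x₀ := by
      intro x hx
      refine const_on_Ioo (f := fun y => α y * ξ y) ?_ ?_ hx hx₀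
      · exact fun y hy => ((dat α hα y hy).mul (dat ξ hξ y hy)).differentiableWithinAt
      · intro y hy
        rw [deriv_fun_mul (dat α hα y hy) (dat ξ hξ y hy)]
        have := h1 y hy; linarith
    -- (B) deriv ξ + γ * ξ is constant
    have hB : ∀ x ∈ Set.Ioo a b, deriv ξ x + γ x * ξ x = deriv ξ x₀ + γ x₀ * ξ x₀ := by
      intro x hx
      refine const_on_Ioo (f := fun y => deriv ξ y + γ y * ξ y) ?_ ?_ hx hx₀
      · exact fun y hy => ((dat _ hdξ y hy).add
          ((dat γ hγ y hy).mul (dat ξ hξ y hy))).differentiableWithinAt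
      · intro y hy
        rw [deriv_fun_add (dat _ hdξ y hy) ((dat γ hγ y hy).fun_mul (dat ξ hξ y hy)),
          deriv_fun_mul (dat γ hγ y hy) (dat ξ hξ y hy)]
        have := h2 y hy; linarith
    set k := α x₀ * ξ x₀ with hk
    set C := deriv ξ x₀ + γ x₀ * ξ x₀ with hC
    have hk0 : k ≠ 0 := mul_ne_zero (hα0 x₀ hx₀) (hξ0 x₀ hx₀)
    refine ⟨-C / k, fun x hx => ?_⟩
    have e1 := hA x hx
    have e2 := hB x hx
    have e3 := h1 x hx
    have hαx := hα0 x hx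
    field_simp
    linear_combination -(deriv α x - γ x * α x) * e1 - (α x) ^ 2 * e2 + α x * e3
  · exact ⟨0, fun x hx => absurd ⟨x, hx⟩ hne⟩
end

section
/- There do not exist differentiable functions f, g : ℝ → ℝ such that f'(x)·g'(y) = 1/(y − x)² for all x, y ∈ ℝ with x < y. -/
/-- There are no differentiable functions `f, g : ℝ → ℝ` with
`f'(x)·g'(y) = 1/(y − x)²` for all `x < y` (unsolvability of the equivalence problem
`y¹₁·y²₂ = 1/(x² − x¹)²` for the product pseudogroup). -/
theorem stmt9 :
    ¬ ∃ f g : ℝ → ℝ, Differentiable ℝ f ∧ Differentiable ℝ g ∧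
      ∀ x y : ℝ, x < y → deriv f x * deriv g y = 1 / (y - x) ^ 2 := by
  rintro ⟨f, g, -, -, h⟩
  have h1 := h 0 1 (by norm_num)
  have h2 := h 0 2 (by norm_num)
  have h3 := h (-1) 1 (by norm_num)
  have h4 := h (-1) 2 (by norm_num)
  norm_num at h1 h2 h3 h4
  have e : deriv f 0 * deriv g 1 * (deriv f (-1) * deriv g 2) =
      deriv f 0 * deriv g 2 * (deriv f (-1) * deriv g 1) := by ring
  rw [h1, h2, h3, h4] at e
  norm_num at e
end

section
/- Let U ⊆ ℝⁿ be open and let f : U → ℝⁿ be three times continuously differentiable with invertible Jacobian matrix J(x) = (∂_i f^k(x)) at every x ∈ U. Define Φ^k_{ij}(x) := Σ_m (J(x)⁻¹)^k_m · ∂_i∂_j f^m(x), so that Σ_r (∂_r f^k)·Φ^r_{ij} = ∂_i∂_j f^k. Then the Vessiot structure equations of the affine structure hold: ∂_i Φ^k_{lj} − ∂_j Φ^k_{li} + Σ_r (Φ^r_{lj} Φ^k_{ri} − Φ^r_{li} Φ^k_{rj}) = 0 on U for all i, j, k, l. -/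
/-! The functions `Φ^k_{lj}(y)` are the entries `(k, j)` of the matrix `Ω_l(y) = J(y)⁻¹ ∂_l J(y)`,
the Maurer–Cartan form of the matrix-valued map `J`. Differentiating `J⁻¹` gives
`∂_i Ω_j = -Ω_i Ω_j + J⁻¹ ∂_i ∂_j J`, so `∂_i Ω_j - ∂_j Ω_i + [Ω_i, Ω_j] = 0` by symmetry of second
derivatives; since `∂_l J^k_j = ∂_l ∂_j f^k` is symmetric in `l, j`, so is `Φ^k_{lj}`, and the
entry `(k, l)` of that matrix identity is the structure equation. -/

open Filter Topology

/-- Partial derivative in the `i`-th coordinate direction of a function on `ℝⁿ`. -/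
noncomputable def pd {n : ℕ} (i : Fin n) (f : (Fin n → ℝ) → ℝ) (x : Fin n → ℝ) : ℝ :=
  fderiv ℝ f x (Pi.single i 1)

section DifferentiableMatrix

variable {𝕜 E : Type*} [NontriviallyNormedField 𝕜] [NormedAddCommGroup E] [NormedSpace 𝕜 E]
  {ι : Type*} [Fintype ι] [DecidableEq ι] {A : E → Matrix ι ι 𝕜} {x : E}

theorem differentiableAt_det (hA : ∀ k l, DifferentiableAt 𝕜 (fun y => A y k l) x) :
    DifferentiableAt 𝕜 (fun y => (A y).det) x := by
  simp only [Matrix.det_apply']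
  refine DifferentiableAt.fun_sum fun σ _ => DifferentiableAt.const_mul ?_ _
  exact (HasFDerivAt.finsetProd fun i _ => (hA (σ i) i).hasFDerivAt).differentiableAt

theorem differentiableAt_adjugate_apply (hA : ∀ k l, DifferentiableAt 𝕜 (fun y => A y k l) x)
    (k l : ι) : DifferentiableAt 𝕜 (fun y => (A y).adjugate k l) x := by
  simp only [Matrix.adjugate_apply]
  refine differentiableAt_det fun a b => ?_
  by_cases h : a = l
  · simp [h]
  · simpa [h] using hA a b

theorem differentiableAt_inv_apply (hA : ∀ k l, DifferentiableAt 𝕜 (fun y => A y k l) x)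
    (hx : IsUnit (A x)) (k l : ι) : DifferentiableAt 𝕜 (fun y => (A y)⁻¹ k l) x := by
  have hdet : (A x).det ≠ 0 := ((Matrix.isUnit_iff_isUnit_det _).1 hx).ne_zero
  simp only [Matrix.inv_def, Matrix.smul_apply, Ring.inverse_eq_inv', smul_eq_mul]
  exact ((differentiableAt_det hA).inv hdet).mul (differentiableAt_adjugate_apply hA k l)

theorem eventually_isUnit_of_differentiableAt
    (hA : ∀ k l, DifferentiableAt 𝕜 (fun y => A y k l) x) (hx : IsUnit (A x)) :
    ∀ᶠ y in 𝓝 x, IsUnit (A y) := by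
  have hdet : (A x).det ≠ 0 := ((Matrix.isUnit_iff_isUnit_det _).1 hx).ne_zero
  filter_upwards [(differentiableAt_det hA).continuousAt.eventually_ne hdet] with y hy
  exact (Matrix.isUnit_iff_isUnit_det _).2 (Ne.isUnit hy)

end DifferentiableMatrix

section PartialDerivative

variable {n : ℕ} {i : Fin n} {F G : (Fin n → ℝ) → ℝ} {x : Fin n → ℝ}

theorem pd_congr (h : F =ᶠ[𝓝 x] G) : pd i F x = pd i G x := by
  unfold pd; rw [h.fderiv_eq]

theorem pd_const (c : ℝ) : pd i (fun _ => c) x = 0 := by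
  simp [pd]

theorem pd_fun_sum {ι : Type*} (s : Finset ι) {F : ι → (Fin n → ℝ) → ℝ}
    (h : ∀ r ∈ s, DifferentiableAt ℝ (F r) x) :
    pd i (fun y => ∑ r ∈ s, F r y) x = ∑ r ∈ s, pd i (F r) x := by
  simp [pd, fderiv_fun_sum h]

theorem pd_fun_mul (hF : DifferentiableAt ℝ F x) (hG : DifferentiableAt ℝ G x) :
    pd i (fun y => F y * G y) x = pd i F x * G x + F x * pd i G x := by
  simp only [pd, fderiv_fun_mul hF hG, _root_.add_apply, _root_.smul_apply, smul_eq_mul]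
  ring

theorem ContDiffAt.pd {m : WithTop ℕ∞} (hF : ContDiffAt ℝ (m + 1) F x) (i : Fin n) :
    ContDiffAt ℝ m (pd i F) x :=
  (hF.fderiv_right le_rfl).clm_apply contDiffAt_const

theorem pd_pd_comm (hF : ContDiffAt ℝ 2 F x) (i j : Fin n) :
    pd i (pd j F) x = pd j (pd i F) x := by
  have hd : DifferentiableAt ℝ (fderiv ℝ F) x :=
    (hF.fderiv_right (m := 1) le_rfl).differentiableAt one_ne_zero
  have hpd : ∀ a b : Fin n,
      pd a (pd b F) x = fderiv ℝ (fderiv ℝ F) x (Pi.single a 1) (Pi.single b 1) := fun a b => by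
    change fderiv ℝ (fun z => fderiv ℝ F z (Pi.single b 1)) x (Pi.single a 1) = _
    simp [fderiv_clm_apply hd (differentiableAt_const _)]
  rw [hpd, hpd]
  exact hF.isSymmSndFDerivAt (by simp) _ _

end PartialDerivative

section MaurerCartan

variable {n : ℕ} {ι : Type*} {i : Fin n}
  {A B : (Fin n → ℝ) → Matrix ι ι ℝ} {x : Fin n → ℝ}

noncomputable def pdMatrix (i : Fin n) (A : (Fin n → ℝ) → Matrix ι ι ℝ) (x : Fin n → ℝ) :
    Matrix ι ι ℝ :=
  Matrix.of fun k l => pd i (fun y => A y k l) x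

@[simp]
theorem pdMatrix_apply (k l : ι) : pdMatrix i A x k l = pd i (fun y => A y k l) x := rfl

theorem pdMatrix_congr (h : A =ᶠ[𝓝 x] B) : pdMatrix i A x = pdMatrix i B x := by
  ext k l
  exact pd_congr (h.mono fun y hy => congrFun (congrFun hy k) l)

variable [Fintype ι]

theorem pdMatrix_mul (hA : ∀ k l, DifferentiableAt ℝ (fun y => A y k l) x)
    (hB : ∀ k l, DifferentiableAt ℝ (fun y => B y k l) x) :
    pdMatrix i (fun y => A y * B y) x = pdMatrix i A x * B x + A x * pdMatrix i B x := by
  ext k l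
  simp only [pdMatrix_apply, Matrix.add_apply, Matrix.mul_apply]
  rw [pd_fun_sum _ fun r _ => (hA k r).fun_mul (hB r l), ← Finset.sum_add_distrib]
  exact Finset.sum_congr rfl fun r _ => pd_fun_mul (hA k r) (hB r l)

variable [DecidableEq ι]

noncomputable def maurerCartanForm (i : Fin n) (A : (Fin n → ℝ) → Matrix ι ι ℝ)
    (x : Fin n → ℝ) : Matrix ι ι ℝ :=
  (A x)⁻¹ * pdMatrix i A x

theorem pdMatrix_inv (hA : ∀ k l, DifferentiableAt ℝ (fun y => A y k l) x) (hx : IsUnit (A x)) :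
    pdMatrix i (fun y => (A y)⁻¹) x = -((A x)⁻¹ * pdMatrix i A x * (A x)⁻¹) := by
  have hdet : IsUnit (A x).det := (Matrix.isUnit_iff_isUnit_det _).1 hx
  have hAinv := differentiableAt_inv_apply hA hx
  have hone : (fun y => A y * (A y)⁻¹) =ᶠ[𝓝 x] fun _ => 1 := by
    filter_upwards [eventually_isUnit_of_differentiableAt hA hx] with y hy
    exact Matrix.mul_nonsing_inv _ ((Matrix.isUnit_iff_isUnit_det _).1 hy)
  have hzero : pdMatrix i A x * (A x)⁻¹ + A x * pdMatrix i (fun y => (A y)⁻¹) x = 0 := by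
    rw [← pdMatrix_mul hA hAinv, pdMatrix_congr hone]
    ext k l
    exact pd_const _
  calc pdMatrix i (fun y => (A y)⁻¹) x
      = (A x)⁻¹ * (A x * pdMatrix i (fun y => (A y)⁻¹) x) :=
        (Matrix.nonsing_inv_mul_cancel_left _ _ hdet).symm
    _ = -((A x)⁻¹ * pdMatrix i A x * (A x)⁻¹) := by
        rw [eq_neg_of_add_eq_zero_right hzero]
        noncomm_ring

theorem maurerCartan_equation (hA : ∀ k l, ContDiffAt ℝ 2 (fun y => A y k l) x)
    (hx : IsUnit (A x)) (i j : Fin n) :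
    pdMatrix i (maurerCartanForm j A) x - pdMatrix j (maurerCartanForm i A) x
      + (maurerCartanForm i A x * maurerCartanForm j A x
        - maurerCartanForm j A x * maurerCartanForm i A x) = 0 := by
  have hA1 k l : DifferentiableAt ℝ (fun y => A y k l) x :=
    (hA k l).differentiableAt two_ne_zero
  have hpdA (a : Fin n) k l : DifferentiableAt ℝ (fun y => pdMatrix a A y k l) x :=
    ((hA k l).pd (m := 1) a).differentiableAt one_ne_zero
  have hpd_form (a b : Fin n) : pdMatrix a (maurerCartanForm b A) x
      = -(maurerCartanForm a A x * maurerCartanForm b A x)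
        + (A x)⁻¹ * pdMatrix a (pdMatrix b A) x := by
    change pdMatrix a (fun y => (A y)⁻¹ * pdMatrix b A y) x = _
    rw [pdMatrix_mul (differentiableAt_inv_apply hA1 hx) (hpdA b), pdMatrix_inv hA1 hx]
    simp only [maurerCartanForm]
    noncomm_ring
  have hsymm : pdMatrix i (pdMatrix j A) x = pdMatrix j (pdMatrix i A) x := by
    ext k l
    exact pd_pd_comm (hA k l) i j
  rw [hpd_form, hpd_form, hsymm]
  noncomm_ring

theorem maurerCartan_equation_apply {A : (Fin n → ℝ) → Matrix (Fin n) (Fin n) ℝ}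
    (hA : ∀ k l, ContDiffAt ℝ 2 (fun y => A y k l) x) (hx : IsUnit (A x))
    (hsymm : ∀ᶠ y in 𝓝 x, ∀ a b k, maurerCartanForm a A y k b = maurerCartanForm b A y k a)
    (i j k l : Fin n) :
    pd i (fun y => maurerCartanForm l A y k j) x - pd j (fun y => maurerCartanForm l A y k i) x
      + ∑ r, (maurerCartanForm l A x r j * maurerCartanForm r A x k i
        - maurerCartanForm l A x r i * maurerCartanForm r A x k j) = 0 := by
  have hMC := congrFun (congrFun (maurerCartan_equation hA hx i j) k) l
  simp only [Matrix.add_apply, Matrix.sub_apply, Matrix.mul_apply, pdMatrix_apply,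
    Matrix.zero_apply] at hMC
  have hsymm_near a b : (fun y => maurerCartanForm a A y k b) =ᶠ[𝓝 x]
      fun y => maurerCartanForm b A y k a := hsymm.mono fun y hy => hy a b k
  have hsymm_x := hsymm.self_of_nhds
  rw [pd_congr (hsymm_near l j), pd_congr (hsymm_near l i), ← hMC, Finset.sum_sub_distrib]
  simp only [hsymm_x l _ _, hsymm_x _ i k, hsymm_x _ j k, mul_comm]

theorem mul_maurerCartanForm (hx : IsUnit (A x)) :
    A x * maurerCartanForm i A x = pdMatrix i A x :=
  Matrix.mul_nonsing_inv_cancel_left _ _ ((Matrix.isUnit_iff_isUnit_det _).1 hx)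

end MaurerCartan

section Jacobian

variable {n : ℕ} {f : (Fin n → ℝ) → (Fin n → ℝ)} {J : (Fin n → ℝ) → Matrix (Fin n) (Fin n) ℝ}

theorem maurerCartanForm_jacobian_apply (hJ : ∀ x k i, J x k i = pd i (fun y => f y k) x)
    (i j k : Fin n) (y : Fin n → ℝ) :
    maurerCartanForm i J y k j = ∑ m, (J y)⁻¹ k m * pd i (pd j fun w => f w m) y := by
  simp [maurerCartanForm, Matrix.mul_apply, hJ]

theorem maurerCartanForm_jacobian_comm (hJ : ∀ x k i, J x k i = pd i (fun y => f y k) x)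
    {y : Fin n → ℝ} (hf : ∀ m, ContDiffAt ℝ 2 (fun w => f w m) y) (i j k : Fin n) :
    maurerCartanForm i J y k j = maurerCartanForm j J y k i := by
  simp only [maurerCartanForm_jacobian_apply hJ, pd_pd_comm (hf _) i j]

end Jacobian

/-- For a `C³` map `f : U → ℝⁿ` on an open `U ⊆ ℝⁿ` with everywhere
invertible Jacobian `J(x) = (∂_i f^k(x))`, the invariants
`Φ^k_{ij} = Σ_m (J⁻¹)^k_m ∂_i∂_j f^m` satisfy `Σ_r (∂_r f^k)·Φ^r_{ij} = ∂_i∂_j f^k` and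
the Vessiot structure equations of the affine structure:
`∂_i Φ^k_{lj} − ∂_j Φ^k_{li} + Σ_r (Φ^r_{lj}Φ^k_{ri} − Φ^r_{li}Φ^k_{rj}) = 0` on `U`. -/
theorem stmt15 (n : ℕ) (U : Set (Fin n → ℝ)) (hU : IsOpen U)
    (f : (Fin n → ℝ) → (Fin n → ℝ))
    (hf : ∀ k, ContDiffOn ℝ 3 (fun x => f x k) U)
    (J : (Fin n → ℝ) → Matrix (Fin n) (Fin n) ℝ)
    (hJ : ∀ x k i, J x k i = pd i (fun y => f y k) x)
    (hJinv : ∀ x ∈ U, IsUnit (J x)) :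
    let Φ : Fin n → Fin n → Fin n → (Fin n → ℝ) → ℝ := fun k i j y =>
      ∑ m, (J y)⁻¹ k m * pd i (fun z => pd j (fun w => f w m) z) y
    (∀ x ∈ U, ∀ i j k : Fin n,
      (∑ r, pd r (fun y => f y k) x * Φ r i j x)
        = pd i (fun z => pd j (fun w => f w k) z) x) ∧
    (∀ x ∈ U, ∀ i j k l : Fin n,
      pd i (Φ k l j) x - pd j (Φ k l i) x
        + ∑ r, (Φ r l j x * Φ k r i x - Φ r l i x * Φ k r j x) = 0) := by
  intro Φ
  have hΦ k i j : Φ k i j = fun y => maurerCartanForm i J y k j :=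
    funext fun y => (maurerCartanForm_jacobian_apply hJ i j k y).symm
  have hf_near : ∀ y ∈ U, ∀ m, ContDiffAt ℝ 3 (fun w => f w m) y :=
    fun y hy m => (hf m).contDiffAt (hU.mem_nhds hy)
  refine ⟨fun x hx i j k => ?_, fun x hx i j k l => ?_⟩
  · calc ∑ r, pd r (fun y => f y k) x * Φ r i j x = (J x * maurerCartanForm i J x) k j := by
          simp [Matrix.mul_apply, hΦ, hJ]
      _ = pd i (fun z => pd j (fun w => f w k) z) x := by
          simp [mul_maurerCartanForm (hJinv x hx), hJ]
  · have hJ_contDiff k r : ContDiffAt ℝ 2 (fun y => J y k r) x := by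
      simpa only [hJ] using (hf_near x hx k).pd (m := 2) r
    have hsymm : ∀ᶠ y in 𝓝 x, ∀ a b k,
        maurerCartanForm a J y k b = maurerCartanForm b J y k a :=
      eventually_of_mem (hU.mem_nhds hx) fun y hy a b k =>
        maurerCartanForm_jacobian_comm hJ (fun m => (hf_near y hy m).of_le (by norm_num)) a b k
    simpa only [hΦ] using maurerCartan_equation_apply hJ_contDiff (hJinv x hx) hsymm i j k l
end

section
/- Let U ⊆ ℝ² be open, let ω¹, ω², ω³ : U → ℝ be continuously differentiable and let ξ¹, ξ² : U → ℝ be continuously differentiable. Define Ω¹ := ∂₂ξ¹ + ω¹∂₂ξ² − ω¹∂₁ξ¹ − (ω¹)²∂₁ξ² + Σ_r ξʳ∂_rω¹, Ω² := ∂₁ξ² + ω²∂₁ξ¹ − ω²∂₂ξ² − (ω²)²∂₂ξ¹ + Σ_r ξʳ∂_rω², and Ω³ := ω³(∂₁ξ¹ + ∂₂ξ²) + ω¹ω³∂₁ξ² + ω²ω³∂₂ξ¹ + Σ_r ξʳ∂_rω³. Then (1 − ω¹ω²)·Ω³ − ω²ω³·Ω¹ − ω¹ω³·Ω² = ω³(1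 − ω¹ω²)·(∂₁ξ¹ + ∂₂ξ²) + Σ_r ξʳ·∂_r(ω³(1 − ω¹ω²)) on U. In particular, if Ω¹ = Ω² = Ω³ = 0 on U, then ω³(1 − ω¹ω²)·(∂₁ξ¹ + ∂₂ξ²) + Σ_r ξʳ·∂_r(ω³(1 − ω¹ω²)) = 0 on U. -/
/-! Expanding `∂_r(ω³(1 − ω¹ω²))` by the Leibniz rule turns the identity into a polynomial
identity in the values and first partial derivatives of `ω` and `ξ`. -/

/-- First partial derivative of a function on `ℝ²`. -/
noncomputable def pd1 (f : ℝ × ℝ → ℝ) (p : ℝ × ℝ) : ℝ :=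
  deriv (fun t => f (t, p.2)) p.1

/-- Second partial derivative of a function on `ℝ²`. -/
noncomputable def pd2 (f : ℝ × ℝ → ℝ) (p : ℝ × ℝ) : ℝ :=
  deriv (fun t => f (p.1, t)) p.2

section Slices

variable {𝕜 E F G : Type*} [NontriviallyNormedField 𝕜]
  [NormedAddCommGroup E] [NormedSpace 𝕜 E] [NormedAddCommGroup F] [NormedSpace 𝕜 F]
  [NormedAddCommGroup G] [NormedSpace 𝕜 G] {f : E × F → G} {p : E × F}

theorem DifferentiableAt.along_fst (hf : DifferentiableAt 𝕜 f p) :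
    DifferentiableAt 𝕜 (fun x => f (x, p.2)) p.1 :=
  hf.comp p.1 (differentiableAt_id.prodMk (differentiableAt_const _))

theorem DifferentiableAt.along_snd (hf : DifferentiableAt 𝕜 f p) :
    DifferentiableAt 𝕜 (fun y => f (p.1, y)) p.2 :=
  hf.comp p.2 ((differentiableAt_const _).prodMk differentiableAt_id)

end Slices

section PartialDerivatives

variable {f g : ℝ × ℝ → ℝ} {p : ℝ × ℝ}

theorem pd1_const_sub (c : ℝ) : pd1 (fun q => c - f q) p = -pd1 f p :=
  deriv_const_sub c

theorem pd2_const_sub (c : ℝ) : pd2 (fun q => c - f q) p = -pd2 f p :=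
  deriv_const_sub c

theorem pd1_mul (hf : DifferentiableAt ℝ f p) (hg : DifferentiableAt ℝ g p) :
    pd1 (fun q => f q * g q) p = pd1 f p * g p + f p * pd1 g p :=
  deriv_fun_mul hf.along_fst hg.along_fst

theorem pd2_mul (hf : DifferentiableAt ℝ f p) (hg : DifferentiableAt ℝ g p) :
    pd2 (fun q => f q * g q) p = pd2 f p * g p + f p * pd2 g p :=
  deriv_fun_mul hf.along_snd hg.along_snd

end PartialDerivatives

theorem stmt16_general (U : Set (ℝ × ℝ)) (hU : IsOpen U)
    (ω1 ω2 ω3 ξ1 ξ2 : ℝ × ℝ → ℝ)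
    (hω1 : ContDiffOn ℝ 1 ω1 U) (hω2 : ContDiffOn ℝ 1 ω2 U)
    (hω3 : ContDiffOn ℝ 1 ω3 U) :
    let Ω1 : ℝ × ℝ → ℝ := fun p =>
      pd2 ξ1 p + ω1 p * pd2 ξ2 p - ω1 p * pd1 ξ1 p - (ω1 p) ^ 2 * pd1 ξ2 p
        + (ξ1 p * pd1 ω1 p + ξ2 p * pd2 ω1 p)
    let Ω2 : ℝ × ℝ → ℝ := fun p =>
      pd1 ξ2 p + ω2 p * pd1 ξ1 p - ω2 p * pd2 ξ2 p - (ω2 p) ^ 2 * pd2 ξ1 p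
        + (ξ1 p * pd1 ω2 p + ξ2 p * pd2 ω2 p)
    let Ω3 : ℝ × ℝ → ℝ := fun p =>
      ω3 p * (pd1 ξ1 p + pd2 ξ2 p) + ω1 p * ω3 p * pd1 ξ2 p + ω2 p * ω3 p * pd2 ξ1 p
        + (ξ1 p * pd1 ω3 p + ξ2 p * pd2 ω3 p)
    (∀ p ∈ U,
      (1 - ω1 p * ω2 p) * Ω3 p - ω2 p * ω3 p * Ω1 p - ω1 p * ω3 p * Ω2 p
        = ω3 p * (1 - ω1 p * ω2 p) * (pd1 ξ1 p + pd2 ξ2 p)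
          + (ξ1 p * pd1 (fun q => ω3 q * (1 - ω1 q * ω2 q)) p
              + ξ2 p * pd2 (fun q => ω3 q * (1 - ω1 q * ω2 q)) p)) ∧
    ((∀ p ∈ U, Ω1 p = 0 ∧ Ω2 p = 0 ∧ Ω3 p = 0) →
      ∀ p ∈ U,
        ω3 p * (1 - ω1 p * ω2 p) * (pd1 ξ1 p + pd2 ξ2 p)
          + (ξ1 p * pd1 (fun q => ω3 q * (1 - ω1 q * ω2 q)) p
              + ξ2 p * pd2 (fun q => ω3 q * (1 - ω1 q * ω2 q)) p) = 0) := by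
  intro Ω1 Ω2 Ω3
  have identity : ∀ p ∈ U,
      (1 - ω1 p * ω2 p) * Ω3 p - ω2 p * ω3 p * Ω1 p - ω1 p * ω3 p * Ω2 p
        = ω3 p * (1 - ω1 p * ω2 p) * (pd1 ξ1 p + pd2 ξ2 p)
          + (ξ1 p * pd1 (fun q => ω3 q * (1 - ω1 q * ω2 q)) p
              + ξ2 p * pd2 (fun q => ω3 q * (1 - ω1 q * ω2 q)) p) := by
    intro p hp
    have diff {ω : ℝ × ℝ → ℝ} (hω : ContDiffOn ℝ 1 ω U) : DifferentiableAt ℝ ω p :=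
      (hω.contDiffAt (hU.mem_nhds hp)).differentiableAt one_ne_zero
    have h12 : DifferentiableAt ℝ (fun q => 1 - ω1 q * ω2 q) p :=
      ((diff hω1).mul (diff hω2)).const_sub 1
    rw [pd1_mul (diff hω3) h12, pd2_mul (diff hω3) h12, pd1_const_sub, pd2_const_sub,
      pd1_mul (diff hω1) (diff hω2), pd2_mul (diff hω1) (diff hω2)]
    ring
  refine ⟨identity, fun hΩ p hp => ?_⟩
  obtain ⟨h1, h2, h3⟩ := hΩ p hp
  rw [← identity p hp, h1, h2, h3]
  ring

/-- For the Medolaghi equations `Ω¹, Ω², Ω³` of the pseudogroup with Lie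
form `y¹₂/y¹₁ = ω¹, y²₁/y²₂ = ω², y¹₁y²₂ = ω³`, one has on any open `U ⊆ ℝ²`:
`(1 − ω¹ω²)·Ω³ − ω²ω³·Ω¹ − ω¹ω³·Ω² = ω³(1 − ω¹ω²)·(∂₁ξ¹ + ∂₂ξ²) + Σ_r ξʳ∂_r(ω³(1 − ω¹ω²))`;
in particular if `Ω¹ = Ω² = Ω³ = 0` then the right-hand side vanishes on `U`. -/
theorem stmt16 (U : Set (ℝ × ℝ)) (hU : IsOpen U)
    (ω1 ω2 ω3 ξ1 ξ2 : ℝ × ℝ → ℝ)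
    (hω1 : ContDiffOn ℝ 1 ω1 U) (hω2 : ContDiffOn ℝ 1 ω2 U)
    (hω3 : ContDiffOn ℝ 1 ω3 U)
    (hξ1 : ContDiffOn ℝ 1 ξ1 U) (hξ2 : ContDiffOn ℝ 1 ξ2 U) :
    let Ω1 : ℝ × ℝ → ℝ := fun p =>
      pd2 ξ1 p + ω1 p * pd2 ξ2 p - ω1 p * pd1 ξ1 p - (ω1 p) ^ 2 * pd1 ξ2 p
        + (ξ1 p * pd1 ω1 p + ξ2 p * pd2 ω1 p)
    let Ω2 : ℝ × ℝ → ℝ := fun p =>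
      pd1 ξ2 p + ω2 p * pd1 ξ1 p - ω2 p * pd2 ξ2 p - (ω2 p) ^ 2 * pd2 ξ1 p
        + (ξ1 p * pd1 ω2 p + ξ2 p * pd2 ω2 p)
    let Ω3 : ℝ × ℝ → ℝ := fun p =>
      ω3 p * (pd1 ξ1 p + pd2 ξ2 p) + ω1 p * ω3 p * pd1 ξ2 p + ω2 p * ω3 p * pd2 ξ1 p
        + (ξ1 p * pd1 ω3 p + ξ2 p * pd2 ω3 p)
    (∀ p ∈ U,
      (1 - ω1 p * ω2 p) * Ω3 p - ω2 p * ω3 p * Ω1 p - ω1 p * ω3 p * Ω2 p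
        = ω3 p * (1 - ω1 p * ω2 p) * (pd1 ξ1 p + pd2 ξ2 p)
          + (ξ1 p * pd1 (fun q => ω3 q * (1 - ω1 q * ω2 q)) p
              + ξ2 p * pd2 (fun q => ω3 q * (1 - ω1 q * ω2 q)) p)) ∧
    ((∀ p ∈ U, Ω1 p = 0 ∧ Ω2 p = 0 ∧ Ω3 p = 0) →
      ∀ p ∈ U,
        ω3 p * (1 - ω1 p * ω2 p) * (pd1 ξ1 p + pd2 ξ2 p)
          + (ξ1 p * pd1 (fun q => ω3 q * (1 - ω1 q * ω2 q)) p
              + ξ2 p * pd2 (fun q => ω3 q * (1 - ω1 q * ω2 q)) p) = 0) :=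
  stmt16_general U hU ω1 ω2 ω3 ξ1 ξ2 hω1 hω2 hω3
end

section
/- Let n ≥ 2 and let ω be a real symmetric invertible n×n matrix and ω̄ a real symmetric n×n matrix. Suppose that every n×n real matrix A satisfying Aᵀω + ωA = 0 also satisfies Aᵀω̄ + ω̄A = 0. Then there exists a ∈ ℝ such that ω̄ = a·ω. -/
/-!
For symmetric `ω`, the equation `Aᵀω + ωA = 0` says that `ωA` is skew-symmetric, and
`A ↦ ωA` is a bijection when `ω` is invertible. Writing `A = ω⁻¹S`, the hypothesis becomes:
`ω̄ω⁻¹S` is skew for every skew `S`. Testing this against `S = Eᵢⱼ - Eⱼᵢ` shows that the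
off-diagonal entries of `ω̄ω⁻¹` vanish and its diagonal entries agree, so `ω̄ω⁻¹ = a·1`.
-/

open Matrix

namespace Matrix

variable {ι R : Type*} [Fintype ι] [DecidableEq ι] [CommRing R]

omit [DecidableEq ι] in
theorem transpose_mul_add_mul_eq_zero_iff {ω : Matrix ι ι R} (hω : ω.IsSymm)
    (A : Matrix ι ι R) :
    Aᵀ * ω + ω * A = 0 ↔ (ω * A)ᵀ = -(ω * A) := by
  rw [transpose_mul, hω.eq, eq_neg_iff_add_eq_zero]

theorem exists_eq_scalar_of_isDiag {M : Matrix ι ι R} (hM : M.IsDiag)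
    (hdiag : ∀ i j, M i i = M j j) : ∃ a, M = scalar ι a := by
  cases isEmpty_or_nonempty ι
  · exact ⟨0, Subsingleton.elim _ _⟩
  obtain ⟨i₀⟩ := ‹Nonempty ι›
  refine ⟨M i₀ i₀, ?_⟩
  calc M = diagonal M.diag := hM.diagonal_diag.symm
    _ = scalar ι (M i₀ i₀) := by
      rw [scalar_apply]
      exact congrArg diagonal (funext fun j => hdiag j i₀)

theorem exists_eq_scalar_of_forall_mul_skew [IsAddTorsionFree R] {P : Matrix ι ι R}
    (hP : ∀ S : Matrix ι ι R, Sᵀ = -S → (P * S)ᵀ = -(P * S)) :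
    ∃ a, P = scalar ι a := by
  have entries : ∀ i j, i ≠ j → P j i = 0 ∧ P i i = P j j := by
    intro i j hij
    have h := hP (single i j 1 - single j i 1) (by simp)
    have hjj := congrFun (congrFun h j) j
    have hji := congrFun (congrFun h j) i
    simp only [mul_sub, transpose_apply, sub_apply, neg_apply, mul_single_apply_same,
      mul_single_apply_of_ne, ne_eq, hij, hij.symm, not_false_eq_true, mul_one, sub_zero,
      zero_sub, neg_neg] at hjj hji
    exact ⟨self_eq_neg.mp hjj, hji⟩
  refine exists_eq_scalar_of_isDiag (fun i j hij => (entries j i hij.symm).1) fun i j => ?_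
  obtain rfl | hij := eq_or_ne i j
  · rfl
  · exact (entries i j hij).2

theorem exists_eq_smul_of_forall_transpose_mul_add_mul_eq_zero [IsAddTorsionFree R]
    {ω ω' : Matrix ι ι R} (hω : ω.IsSymm) (hdet : IsUnit ω.det) (hω' : ω'.IsSymm)
    (h : ∀ A : Matrix ι ι R, Aᵀ * ω + ω * A = 0 → Aᵀ * ω' + ω' * A = 0) :
    ∃ a : R, ω' = a • ω := by
  obtain ⟨a, ha⟩ : ∃ a, ω' * ω⁻¹ = scalar ι a := by
    refine exists_eq_scalar_of_forall_mul_skew fun S hS => ?_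
    have hA : (ω⁻¹ * S)ᵀ * ω + ω * (ω⁻¹ * S) = 0 := by
      rwa [transpose_mul_add_mul_eq_zero_iff hω, mul_nonsing_inv_cancel_left _ _ hdet]
    rw [mul_assoc, ← transpose_mul_add_mul_eq_zero_iff hω']
    exact h _ hA
  refine ⟨a, ?_⟩
  calc ω' = ω' * ω⁻¹ * ω := (nonsing_inv_mul_cancel_right ω ω' hdet).symm
    _ = a • ω := by rw [ha, scalar_apply, smul_eq_diagonal_mul]

end Matrix

theorem stmt19_general (n : ℕ) (ω ωb : Matrix (Fin n) (Fin n) ℝ)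
    (hω : ω.IsSymm) (hinv : IsUnit ω) (hωb : ωb.IsSymm)
    (h : ∀ A : Matrix (Fin n) (Fin n) ℝ, Aᵀ * ω + ω * A = 0 → Aᵀ * ωb + ωb * A = 0) :
    ∃ a : ℝ, ωb = a • ω :=
  exists_eq_smul_of_forall_transpose_mul_add_mul_eq_zero hω
    ((isUnit_iff_isUnit_det ω).mp hinv) hωb h

/-- For `n ≥ 2`, if `ω` is a real symmetric invertible `n×n` matrix and
`ω̄` a real symmetric `n×n` matrix such that every `A` with `Aᵀω + ωA = 0` also satisfies
`Aᵀω̄ + ω̄A = 0`, then `ω̄ = a·ω` for some real `a` (two metrics define the same Killing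
system iff they are proportional). -/
theorem stmt19 (n : ℕ) (hn : 2 ≤ n) (ω ωb : Matrix (Fin n) (Fin n) ℝ)
    (hω : ω.IsSymm) (hinv : IsUnit ω) (hωb : ωb.IsSymm)
    (h : ∀ A : Matrix (Fin n) (Fin n) ℝ, Aᵀ * ω + ω * A = 0 → Aᵀ * ωb + ωb * A = 0) :
    ∃ a : ℝ, ωb = a • ω :=
  stmt19_general n ω ωb hω hinv hωb h
end
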